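/- arXiv:2412.14485 — 3 statements merged into one kernel-verified Lean document; each statement's English description precedes it below -/
import Mathlib

section
/- The projected model count of a formula equals the result of first ∃-projecting away all non-projection variables and then Σ-projecting away all projection variables: for a 0/1-valued function [F] over disjoint variable sets X and Y with X ∪ Y the full variable set, applying ∃-projection successively over all y ∈ Y and then Σ-projection successively over all x ∈ X yields the constant Σ_{β ∈ 2^X} max_{α ∈ 2^Y} [F](α ∪ β). -/
def sumProj {V : Type*} [DecidableEq V] (x : V) (f : (V → Bool) → ℝ) : (V → Bool) → ℝ :=
  fun σ => f (Function.update σ x true) + f (Function.update σ x false)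

def exProj {V : Type*} [DecidableEq V] (x : V) (f : (V → Bool) → ℝ) : (V → Bool) → ℝ :=
  fun σ => max (f (Function.update σ x true)) (f (Function.update σ x false))

def sumProjL {V : Type*} [DecidableEq V] (l : List V) (f : (V → Bool) → ℝ) : (V → Bool) → ℝ :=
  l.foldr sumProj f

def exProjL {V : Type*} [DecidableEq V] (l : List V) (f : (V → Bool) → ℝ) : (V → Bool) → ℝ :=
  l.foldr exProj f

/-- Combine an assignment of the variables of `X` with an assignment of those of `Y`. -/
def combine {V : Type*} [DecidableEq V] (X Y : Finset V)
    (β : {v // v ∈ X} → Bool) (α : {v // v ∈ Y} → Bool) : V → Bool :=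
  fun v => if h : v ∈ X then β ⟨v, h⟩ else if h' : v ∈ Y then α ⟨v, h'⟩ else false


open Classical in
noncomputable def agreeOff {V : Type*} [DecidableEq V] [Fintype V]
    (S : Finset V) (σ : V → Bool) : Finset (V → Bool) :=
  Finset.univ.filter (fun τ => ∀ v ∉ S, τ v = σ v)

section
variable {V : Type*} [DecidableEq V] [Fintype V]

lemma mem_agreeOff {S : Finset V} {σ τ : V → Bool} :
    τ ∈ agreeOff S σ ↔ ∀ v ∉ S, τ v = σ v := by
  simp [agreeOff]

lemma agreeOff_nonempty (S : Finset V) (σ : V → Bool) : (agreeOff S σ).Nonempty :=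
  ⟨σ, mem_agreeOff.2 fun _ _ => rfl⟩

lemma agreeOff_empty (σ : V → Bool) : agreeOff (∅ : Finset V) σ = {σ} := by
  ext τ
  simp [mem_agreeOff, funext_iff]

lemma mem_agreeOff_update {S : Finset V} {x : V} (hx : x ∉ S) {σ τ : V → Bool} {b : Bool} :
    τ ∈ agreeOff S (Function.update σ x b) ↔ (τ x = b ∧ τ ∈ agreeOff (insert x S) σ) := by
  simp only [mem_agreeOff]
  constructor
  · intro h
    refine ⟨by simpa using h x hx, fun v hv => ?_⟩
    have hvx : v ≠ x := fun e => hv (e ▸ Finset.mem_insert_self x S)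
    have hvS : v ∉ S := fun e => hv (Finset.mem_insert_of_mem e)
    simpa [Function.update, hvx] using h v hvS
  · rintro ⟨hb, h⟩ v hv
    by_cases hvx : v = x
    · subst hvx; simp [hb]
    · have : v ∉ insert x S := by simp [hvx, hv]
      simpa [Function.update, hvx] using h v this

lemma agreeOff_insert {S : Finset V} {x : V} (hx : x ∉ S) (σ : V → Bool) :
    agreeOff (insert x S) σ =
      agreeOff S (Function.update σ x true) ∪ agreeOff S (Function.update σ x false) := by
  ext τ
  simp only [Finset.mem_union, mem_agreeOff_update hx]
  rcases Bool.dichotomy (τ x) with h | h <;> simp [h]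

lemma agreeOff_disjoint {S : Finset V} {x : V} (hx : x ∉ S) (σ : V → Bool) :
    Disjoint (agreeOff S (Function.update σ x true)) (agreeOff S (Function.update σ x false)) := by
  rw [Finset.disjoint_left]
  intro τ h1 h2
  have e1 := (mem_agreeOff_update hx).1 h1
  have e2 := (mem_agreeOff_update hx).1 h2
  simp [e1.1] at e2

lemma sumProjL_eq (l : List V) (hl : l.Nodup) (f : (V → Bool) → ℝ) (σ : V → Bool) :
    sumProjL l f σ = ∑ τ ∈ agreeOff l.toFinset σ, f τ := by
  induction l generalizing σ with
  | nil => simp [sumProjL, agreeOff_empty]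
  | cons x l ih =>
    have hx : x ∉ l.toFinset := by simpa using (List.nodup_cons.1 hl).1
    have hl' := (List.nodup_cons.1 hl).2
    have : sumProjL (x :: l) f σ = sumProjL l f (Function.update σ x true)
        + sumProjL l f (Function.update σ x false) := rfl
    rw [this, ih hl', ih hl', List.toFinset_cons, agreeOff_insert hx,
      Finset.sum_union (agreeOff_disjoint hx σ)]

lemma exProjL_eq (l : List V) (hl : l.Nodup) (f : (V → Bool) → ℝ) (σ : V → Bool) :
    exProjL l f σ = (agreeOff l.toFinset σ).sup' (agreeOff_nonempty _ _) f := by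
  induction l generalizing σ with
  | nil => simp [exProjL, agreeOff_empty]
  | cons x l ih =>
    have hx : x ∉ l.toFinset := by simpa using (List.nodup_cons.1 hl).1
    have hl' := (List.nodup_cons.1 hl).2
    have h : exProjL (x :: l) f σ = max (exProjL l f (Function.update σ x true))
        (exProjL l f (Function.update σ x false)) := rfl
    rw [h, ih hl', ih hl']
    rw [Finset.sup'_congr (agreeOff_nonempty (List.toFinset (x :: l)) σ)
      (by rw [List.toFinset_cons, agreeOff_insert hx]) (fun _ _ => rfl),
      Finset.sup'_union (agreeOff_nonempty _ _) (agreeOff_nonempty _ _) f]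

end

theorem stmt6 {V : Type*} [DecidableEq V] [Fintype V]
    (X Y : Finset V) (hdisj : Disjoint X Y) (hcover : X ∪ Y = Finset.univ)
    (F : (V → Bool) → ℝ) (h01 : ∀ τ, F τ = 0 ∨ F τ = 1)
    (lX lY : List V) (hlX : lX.Nodup) (hlY : lY.Nodup)
    (hX : ∀ v, v ∈ lX ↔ v ∈ X) (hY : ∀ v, v ∈ lY ↔ v ∈ Y) (σ : V → Bool) :
    sumProjL lX (exProjL lY F) σ =
      ∑ β : {v // v ∈ X} → Bool,
        Finset.univ.sup' Finset.univ_nonempty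
          (fun α : {v // v ∈ Y} → Bool => F (combine X Y β α)) := by
  have hXf : lX.toFinset = X := by ext v; simpa using hX v
  have hYf : lY.toFinset = Y := by ext v; simpa using hY v
  have hXY : ∀ v : V, v ∉ Y → v ∈ X := by
    intro v hv
    have : v ∈ X ∪ Y := hcover ▸ Finset.mem_univ v
    rcases Finset.mem_union.1 this with h | h
    · exact h
    · exact absurd h hv
  have hYX : ∀ v : V, v ∉ X → v ∈ Y := by
    intro v hv
    have : v ∈ X ∪ Y := hcover ▸ Finset.mem_univ v
    rcases Finset.mem_union.1 this with h | h
    · exact absurd h hv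
    · exact h
  -- combine lands in agreeOff Y τ
  have comb_mem : ∀ (τ : V → Bool) (α : {v // v ∈ Y} → Bool),
      combine X Y (fun w => τ w.1) α ∈ agreeOff Y τ := by
    intro τ α
    rw [mem_agreeOff]
    intro v hv
    have hvX := hXY v hv
    simp [combine, hvX]
  have rho_eq : ∀ (τ : V → Bool), ∀ ρ ∈ agreeOff Y τ,
      ρ = combine X Y (fun w => τ w.1) (fun w => ρ w.1) := by
    intro τ ρ hρ
    funext v
    by_cases h : v ∈ X
    · have hvY : v ∉ Y := Finset.disjoint_left.1 hdisj h
      have := mem_agreeOff.1 hρ v hvY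
      simp [combine, h, this]
    · have hvY := hYX v h
      simp [combine, h, hvY]
  have sup_eq : ∀ τ : V → Bool,
      (agreeOff Y τ).sup' (agreeOff_nonempty _ _) F =
        Finset.univ.sup' Finset.univ_nonempty
          (fun α : {v // v ∈ Y} → Bool => F (combine X Y (fun w => τ w.1) α)) := by
    intro τ
    apply le_antisymm
    · apply Finset.sup'_le
      intro ρ hρ
      rw [rho_eq τ ρ hρ]
      exact Finset.le_sup' (f := fun α : {v // v ∈ Y} → Bool =>
        F (combine X Y (fun w => τ w.1) α)) (Finset.mem_univ _)
    · apply Finset.sup'_le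
      intro α _
      exact Finset.le_sup' F (comb_mem τ α)
  rw [sumProjL_eq lX hlX _ σ, hXf]
  refine Finset.sum_nbij' (fun τ => fun w : {v // v ∈ X} => τ w.1)
    (fun β => fun v => if h : v ∈ X then β ⟨v, h⟩ else σ v) ?_ ?_ ?_ ?_ ?_
  · intro τ _; exact Finset.mem_univ _
  · intro β _
    rw [mem_agreeOff]
    intro v hv
    simp [hv]
  · intro τ hτ
    funext v
    by_cases h : v ∈ X
    · simp [h]
    · simp [h, mem_agreeOff.1 hτ v h]
  · intro β _
    funext w
    simp [w.2]
  · intro τ hτ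
    rw [exProjL_eq lY hlY F τ, hYf, sup_eq τ]
end

section
/- In a project-join tree of a formula F, if o and q are distinct children of an internal node n, then the set P(o) of variables projected in the subtree rooted at o is disjoint from the set of variables appearing in the constraints mapped to leaves of the subtree rooted at q. That is, P(o) ∩ vars(Φ(q)) = ∅. -/
/-- A project-join tree: leaves carry constraints, internal nodes carry a set of
projected variables (as a list) and a list of children. -/
inductive PJT (V C : Type*) where
  | leaf (c : C)
  | internal (label : List V) (children : List (PJT V C))

namespace PJT

variable {V C : Type*}

/-- Constraints at the leaves of (the subtree rooted at) `t`, i.e. `Φ(t)`. -/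
def constraints : PJT V C → List C
  | .leaf c => [c]
  | .internal _ cs => cs.attach.flatMap (fun x => x.1.constraints)
decreasing_by simp only [PJT.internal.sizeOf_spec]; have := List.sizeOf_lt_of_mem x.2; omega

/-- Variables projected in the subtree rooted at `t`, i.e. `P(t)`. -/
def projVars : PJT V C → List V
  | .leaf _ => []
  | .internal L cs => L ++ cs.attach.flatMap (fun x => x.1.projVars)
decreasing_by simp only [PJT.internal.sizeOf_spec]; have := List.sizeOf_lt_of_mem x.2; omega

/-- `s.IsSubtree t` : `s` is a node of (the subtree rooted at) `t`. -/
inductive IsSubtree : PJT V C → PJT V C → Prop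
  | refl (t : PJT V C) : IsSubtree t t
  | step {s t : PJT V C} {L : List V} {cs : List (PJT V C)} :
      t ∈ cs → IsSubtree s t → IsSubtree s (.internal L cs)

def IsInternal : PJT V C → Prop
  | .leaf _ => False
  | .internal _ _ => True

def label : PJT V C → List V
  | .leaf _ => []
  | .internal L _ => L

end PJT

namespace PJT

variable {V C : Type*}

theorem IsSubtree.trans {a b c : PJT V C} (h1 : a.IsSubtree b) (h2 : b.IsSubtree c) :
    a.IsSubtree c := by
  induction h2 with
  | refl => exact h1
  | step hm _ ih => exact .step hm ih

theorem constraints_sublist {s t : PJT V C} (h : s.IsSubtree t) :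
    s.constraints.Sublist t.constraints := by
  induction h with
  | refl => exact List.Sublist.refl _
  | step hm _ ih =>
    refine ih.trans ?_
    rw [constraints, List.flatMap]
    exact List.sublist_flatten_of_mem (List.mem_map.2 ⟨⟨_, hm⟩, List.mem_attach _ _, rfl⟩)

theorem child_subtree {L : List V} {cs : List (PJT V C)} {c : PJT V C} (h : c ∈ cs) :
    c.IsSubtree (PJT.internal L cs) := .step h (.refl _)

theorem mem_projVars {t : PJT V C} {x : V} (hx : x ∈ t.projVars) :
    ∃ L cs, (PJT.internal L cs).IsSubtree t ∧ x ∈ L := by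
  induction t using PJT.projVars.induct with
  | case1 c => simp [projVars] at hx
  | case2 L cs ih =>
    rw [projVars, List.mem_append] at hx
    rcases hx with hx | hx
    · exact ⟨L, cs, .refl _, hx⟩
    · rw [List.mem_flatMap] at hx
      obtain ⟨⟨c, hc⟩, -, hxc⟩ := hx
      obtain ⟨L', cs', hs, hxL⟩ := ih ⟨c, hc⟩ hxc
      exact ⟨L', cs', hs.trans (child_subtree hc), hxL⟩

end PJT

open PJT in
/-- Lemma 1: for distinct children `o = cs.get i` and `q = cs.get j` of an internal node of a
project-join tree, the variables projected in the subtree of `o` do not occur in the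
constraints at the leaves of the subtree of `q`. -/
theorem stmt8 {V C : Type*} [DecidableEq V] (vars : C → Finset V) (t : PJT V C)
    (hnodup : t.constraints.Nodup)
    (hanc : ∀ s : PJT V C, s.IsSubtree t → ∀ L cs, s = PJT.internal L cs →
      ∀ x ∈ L, ∀ c ∈ t.constraints, x ∈ vars c → c ∈ s.constraints)
    (L : List V) (cs : List (PJT V C))
    (hsub : (PJT.internal L cs).IsSubtree t)
    (i j : Fin cs.length) (hij : i ≠ j) :
    ∀ x ∈ (cs.get i).projVars, ∀ c ∈ (cs.get j).constraints, x ∉ vars c := by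
  intro x hx c hc hxc
  obtain ⟨L', cs', hsub', hxL'⟩ := mem_projVars hx
  have hsubi : (cs.get i).IsSubtree (PJT.internal L cs) := child_subtree (cs.get_mem i)
  have hsubj : (cs.get j).IsSubtree (PJT.internal L cs) := child_subtree (cs.get_mem j)
  have hct : c ∈ t.constraints :=
    (constraints_sublist (hsubj.trans hsub)).mem hc
  have hcs' : c ∈ (PJT.internal L' cs').constraints :=
    hanc _ ((hsub'.trans hsubi).trans hsub) L' cs' rfl x hxL' c hct hxc
  have hci : c ∈ (cs.get i).constraints := (constraints_sublist hsub').mem hcs'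
  have hnode : (PJT.internal L cs).constraints.Nodup :=
    (constraints_sublist hsub).nodup hnodup
  rw [PJT.constraints] at hnode
  have hpw := (List.nodup_flatMap.1 hnode).2
  rw [List.pairwise_iff_get] at hpw
  have hlen : cs.attach.length = cs.length := List.length_attach
  rcases lt_or_gt_of_ne (Fin.val_ne_of_ne hij) with h | h
  · have := hpw (i.cast hlen.symm) (j.cast hlen.symm) h
    simp only [Function.onFun, List.get_attach] at this
    exact this hci hc
  · have := hpw (j.cast hlen.symm) (i.cast hlen.symm) h
    simp only [Function.onFun, List.get_attach] at this
    exact this hc hci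
end

section
/- Let (F, X, Y) be a projected model counting instance and 𝒯 an X,Y-graded project-join tree for F. For every node n, define hₙ as the product of the 0/1-valued indicator functions [C] of constraints C ∈ Φ(n), and define the projected valuation gₙ recursively: gₙ = [γ(n)] at leaves, gₙ = Σ-project away π(n) from the product of children's valuations if n is in the X-grade, and gₙ = ∃-project away π(n) from that product if n is in the Y-grade. Then for every node n, gₙ = Σ_{P(n) ∩ X} ∃_{P(n) ∩ Y} hₙ. -/
def DependsOnlyOn {V : Type*} (f : (V → Bool) → ℝ) (S : Set V) : Prop :=
  ∀ τ τ' : V → Bool, (∀ v ∈ S, τ v = τ' v) → f τ = f τ'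

/-- The projected valuation `gₙ` of a node of an X,Y-graded project-join tree:
indicators at leaves, Σ-projection of the product of the children's valuations at
X-grade internal nodes, ∃-projection at Y-grade internal nodes. -/
noncomputable def PJT.val {V C : Type*} [DecidableEq V]
    (ind : C → (V → Bool) → ℝ) (inX : PJT V C → Bool) : PJT V C → ((V → Bool) → ℝ)
  | .leaf c => ind c
  | .internal L cs =>
      let p : (V → Bool) → ℝ := fun τ => (cs.attach.map (fun x => PJT.val ind inX x.1 τ)).prod
      if inX (.internal L cs) then sumProjL L p else exProjL L p
decreasing_by simp only [PJT.internal.sizeOf_spec]; have := List.sizeOf_lt_of_mem x.2; omega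

/-- The indicator `hₙ` of the conjunction of the constraints `Φ(n)`. -/
noncomputable def PJT.hFun {V C : Type*} (ind : C → (V → Bool) → ℝ) (n : PJT V C) :
    (V → Bool) → ℝ :=
  fun τ => (n.constraints.map (fun c => ind c τ)).prod


set_option linter.unusedSectionVars false
section Helpers
variable {V C : Type*} [DecidableEq V]

lemma dep_mono {f : (V → Bool) → ℝ} {S S' : Set V} (h : DependsOnlyOn f S) (hss : S ⊆ S') :
    DependsOnlyOn f S' := fun τ τ' ha => h τ τ' (fun v hv => ha v (hss hv))

lemma update_agree {S : Set V} {τ τ' : V → Bool} (ha : ∀ v ∈ S, τ v = τ' v) (x : V) (b : Bool) :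
    ∀ v ∈ S, Function.update τ x b v = Function.update τ' x b v := by
  intro v hv
  by_cases hvx : v = x
  · subst hvx; simp
  · simp [Function.update_of_ne hvx, ha v hv]

lemma sumProj_dep {f : (V → Bool) → ℝ} {S : Set V} (h : DependsOnlyOn f S) (x : V) :
    DependsOnlyOn (sumProj x f) S := by
  intro τ τ' ha
  unfold sumProj
  rw [h _ _ (update_agree ha x true), h _ _ (update_agree ha x false)]

lemma exProj_dep {f : (V → Bool) → ℝ} {S : Set V} (h : DependsOnlyOn f S) (x : V) :
    DependsOnlyOn (exProj x f) S := by
  intro τ τ' ha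
  unfold exProj
  rw [h _ _ (update_agree ha x true), h _ _ (update_agree ha x false)]

lemma sumProjL_dep {f : (V → Bool) → ℝ} {S : Set V} (h : DependsOnlyOn f S) (l : List V) :
    DependsOnlyOn (sumProjL l f) S := by
  induction l with
  | nil => exact h
  | cons x l ih => exact sumProj_dep ih x

lemma exProjL_dep {f : (V → Bool) → ℝ} {S : Set V} (h : DependsOnlyOn f S) (l : List V) :
    DependsOnlyOn (exProjL l f) S := by
  induction l with
  | nil => exact h
  | cons x l ih => exact exProj_dep ih x

lemma update_not_mem {g : (V → Bool) → ℝ} {S : Set V} (hg : DependsOnlyOn g S) {x : V}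
    (hx : x ∉ S) (σ : V → Bool) (b : Bool) : g (Function.update σ x b) = g σ := by
  apply hg
  intro v hv
  exact Function.update_of_ne (by rintro rfl; exact hx hv) _ _

lemma sumProj_mul_right {f g : (V → Bool) → ℝ} {S : Set V} (hg : DependsOnlyOn g S) {x : V}
    (hx : x ∉ S) :
    sumProj x (fun τ => f τ * g τ) = fun τ => sumProj x f τ * g τ := by
  funext σ
  unfold sumProj
  dsimp only
  rw [update_not_mem hg hx σ true, update_not_mem hg hx σ false]
  ring

lemma exProj_mul_right {f g : (V → Bool) → ℝ} {S : Set V} (hg : DependsOnlyOn g S) {x : V}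
    (hx : x ∉ S) (hg0 : ∀ τ, 0 ≤ g τ) :
    exProj x (fun τ => f τ * g τ) = fun τ => exProj x f τ * g τ := by
  funext σ
  unfold exProj
  dsimp only
  rw [update_not_mem hg hx σ true, update_not_mem hg hx σ false]
  exact (max_mul_of_nonneg _ _ (hg0 σ)).symm

lemma sumProjL_mul_right {f g : (V → Bool) → ℝ} {S : Set V} (hg : DependsOnlyOn g S)
    {l : List V} (hl : ∀ x ∈ l, x ∉ S) :
    sumProjL l (fun τ => f τ * g τ) = fun τ => sumProjL l f τ * g τ := by
  induction l with
  | nil => rfl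
  | cons x l ih =>
    show sumProj x (sumProjL l fun τ => f τ * g τ) = _
    rw [ih (fun y hy => hl y (List.mem_cons_of_mem _ hy)),
      sumProj_mul_right hg (hl x (List.mem_cons_self))]
    rfl

lemma exProjL_mul_right {f g : (V → Bool) → ℝ} {S : Set V} (hg : DependsOnlyOn g S)
    {l : List V} (hl : ∀ x ∈ l, x ∉ S) (hg0 : ∀ τ, 0 ≤ g τ) :
    exProjL l (fun τ => f τ * g τ) = fun τ => exProjL l f τ * g τ := by
  induction l with
  | nil => rfl
  | cons x l ih =>
    show exProj x (exProjL l fun τ => f τ * g τ) = _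
    rw [ih (fun y hy => hl y (List.mem_cons_of_mem _ hy)),
      exProj_mul_right hg (hl x (List.mem_cons_self)) hg0]
    rfl

lemma sumProjL_mul_left {f g : (V → Bool) → ℝ} {S : Set V} (hg : DependsOnlyOn g S)
    {l : List V} (hl : ∀ x ∈ l, x ∉ S) :
    sumProjL l (fun τ => g τ * f τ) = fun τ => g τ * sumProjL l f τ := by
  have e : (fun τ => g τ * f τ) = (fun τ => f τ * g τ) := by funext τ; ring
  rw [e, sumProjL_mul_right hg hl]
  funext σ; ring

lemma exProjL_mul_left {f g : (V → Bool) → ℝ} {S : Set V} (hg : DependsOnlyOn g S)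
    {l : List V} (hl : ∀ x ∈ l, x ∉ S) (hg0 : ∀ τ, 0 ≤ g τ) :
    exProjL l (fun τ => g τ * f τ) = fun τ => g τ * exProjL l f τ := by
  have e : (fun τ => g τ * f τ) = (fun τ => f τ * g τ) := by funext τ; ring
  rw [e, exProjL_mul_right hg hl hg0]
  funext σ; ring

lemma sumProjL_nonneg {f : (V → Bool) → ℝ} (hf : ∀ τ, 0 ≤ f τ) (l : List V) :
    ∀ τ, 0 ≤ sumProjL l f τ := by
  induction l with
  | nil => exact hf
  | cons x l ih => exact fun τ => add_nonneg (ih _) (ih _)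

lemma exProjL_nonneg {f : (V → Bool) → ℝ} (hf : ∀ τ, 0 ≤ f τ) (l : List V) :
    ∀ τ, 0 ≤ exProjL l f τ := by
  induction l with
  | nil => exact hf
  | cons x l ih => exact fun τ => le_max_of_le_left (ih _)

lemma sumProjL_append (l₁ l₂ : List V) (f : (V → Bool) → ℝ) :
    sumProjL (l₁ ++ l₂) f = sumProjL l₁ (sumProjL l₂ f) :=
  List.foldr_append

lemma exProjL_append (l₁ l₂ : List V) (f : (V → Bool) → ℝ) :
    exProjL (l₁ ++ l₂) f = exProjL l₁ (exProjL l₂ f) :=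
  List.foldr_append

lemma prodF_dep {α : Type*} {l : List α} {F : α → (V → Bool) → ℝ} {S : Set V}
    (h : ∀ a ∈ l, DependsOnlyOn (F a) S) :
    DependsOnlyOn (fun τ => (l.map (fun a => F a τ)).prod) S := by
  intro τ τ' ha
  simp only
  congr 1
  apply List.map_congr_left
  intro a hf
  exact h a hf τ τ' ha

lemma prodF_nonneg {α : Type*} {l : List α} {F : α → (V → Bool) → ℝ}
    (h : ∀ a ∈ l, ∀ τ, 0 ≤ F a τ) : ∀ τ, 0 ≤ (l.map (fun a => F a τ)).prod := by
  intro τ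
  apply List.prod_nonneg
  intro x hx
  obtain ⟨a, ha, rfl⟩ := List.mem_map.mp hx
  exact h a ha τ

lemma comb_sum (ps : List (List V × ((V → Bool) → ℝ) × Set V))
    (hdep : ∀ p ∈ ps, DependsOnlyOn p.2.1 p.2.2)
    (hpw : ps.Pairwise (fun p q => (∀ v ∈ p.1, v ∉ q.2.2) ∧ (∀ v ∈ q.1, v ∉ p.2.2))) :
    (fun τ => (ps.map (fun p => sumProjL p.1 p.2.1 τ)).prod)
      = sumProjL (ps.flatMap (fun p => p.1))
          (fun τ => (ps.map (fun p => p.2.1 τ)).prod) := by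
  induction ps with
  | nil => funext σ; simp [sumProjL]
  | cons p rest ih =>
    obtain ⟨hp, hpw'⟩ := List.pairwise_cons.mp hpw
    have hdep' : ∀ q ∈ rest, DependsOnlyOn q.2.1 q.2.2 :=
      fun q hq => hdep q (List.mem_cons_of_mem _ hq)
    set U : Set V := ⋃ q ∈ rest, q.2.2 with hUdef
    have hPdep : DependsOnlyOn (fun τ => (rest.map (fun q => q.2.1 τ)).prod) U :=
      prodF_dep (fun q hq => dep_mono (hdep' q hq) (fun v hv => Set.mem_iUnion₂.mpr ⟨q, hq, hv⟩))
    have hGdep : DependsOnlyOn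
        (sumProjL (rest.flatMap (fun p => p.1)) (fun τ => (rest.map (fun q => q.2.1 τ)).prod)) U :=
      sumProjL_dep hPdep _
    have hAavoid : ∀ x ∈ p.1, x ∉ U := by
      intro x hx hxU
      obtain ⟨q, hq, hxq⟩ := Set.mem_iUnion₂.mp hxU
      exact (hp q hq).1 x hx hxq
    have hBavoid : ∀ x ∈ rest.flatMap (fun p => p.1), x ∉ p.2.2 := by
      intro x hx
      obtain ⟨q, hq, hxq⟩ := List.mem_flatMap.mp hx
      exact (hp q hq).2 x hxq
    calc (fun τ => ((p :: rest).map (fun p => sumProjL p.1 p.2.1 τ)).prod)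
        = fun τ => sumProjL p.1 p.2.1 τ *
            sumProjL (rest.flatMap (fun p => p.1))
              (fun τ => (rest.map (fun q => q.2.1 τ)).prod) τ := by
          simp only [List.map_cons, List.prod_cons]
          rw [← ih hdep' hpw']
      _ = sumProjL p.1 (fun τ => p.2.1 τ *
            sumProjL (rest.flatMap (fun p => p.1))
              (fun τ => (rest.map (fun q => q.2.1 τ)).prod) τ) :=
          (sumProjL_mul_right hGdep hAavoid).symm
      _ = sumProjL p.1 (sumProjL (rest.flatMap (fun p => p.1))
            (fun τ => p.2.1 τ * (rest.map (fun q => q.2.1 τ)).prod)) := by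
          exact congrArg (sumProjL p.1) (sumProjL_mul_left (hdep p (List.mem_cons_self)) hBavoid).symm
      _ = sumProjL ((p :: rest).flatMap (fun p => p.1))
            (fun τ => ((p :: rest).map (fun p => p.2.1 τ)).prod) := by
          rw [List.flatMap_cons, sumProjL_append]
          simp only [List.map_cons, List.prod_cons]

lemma comb_ex (ps : List (List V × ((V → Bool) → ℝ) × Set V))
    (hdep : ∀ p ∈ ps, DependsOnlyOn p.2.1 p.2.2)
    (hnn : ∀ p ∈ ps, ∀ τ, 0 ≤ p.2.1 τ)
    (hpw : ps.Pairwise (fun p q => (∀ v ∈ p.1, v ∉ q.2.2) ∧ (∀ v ∈ q.1, v ∉ p.2.2))) :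
    (fun τ => (ps.map (fun p => exProjL p.1 p.2.1 τ)).prod)
      = exProjL (ps.flatMap (fun p => p.1))
          (fun τ => (ps.map (fun p => p.2.1 τ)).prod) := by
  induction ps with
  | nil => funext σ; simp [exProjL]
  | cons p rest ih =>
    obtain ⟨hp, hpw'⟩ := List.pairwise_cons.mp hpw
    have hdep' : ∀ q ∈ rest, DependsOnlyOn q.2.1 q.2.2 :=
      fun q hq => hdep q (List.mem_cons_of_mem _ hq)
    have hnn' : ∀ q ∈ rest, ∀ τ, 0 ≤ q.2.1 τ :=
      fun q hq => hnn q (List.mem_cons_of_mem _ hq)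
    set U : Set V := ⋃ q ∈ rest, q.2.2 with hUdef
    have hPdep : DependsOnlyOn (fun τ => (rest.map (fun q => q.2.1 τ)).prod) U :=
      prodF_dep (fun q hq => dep_mono (hdep' q hq) (fun v hv => Set.mem_iUnion₂.mpr ⟨q, hq, hv⟩))
    have hPnn : ∀ τ, 0 ≤ (rest.map (fun q => q.2.1 τ)).prod :=
      prodF_nonneg hnn'
    have hGdep : DependsOnlyOn
        (exProjL (rest.flatMap (fun p => p.1)) (fun τ => (rest.map (fun q => q.2.1 τ)).prod)) U :=
      exProjL_dep hPdep _
    have hGnn : ∀ τ, 0 ≤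
        exProjL (rest.flatMap (fun p => p.1)) (fun τ => (rest.map (fun q => q.2.1 τ)).prod) τ :=
      exProjL_nonneg hPnn _
    have hAavoid : ∀ x ∈ p.1, x ∉ U := by
      intro x hx hxU
      obtain ⟨q, hq, hxq⟩ := Set.mem_iUnion₂.mp hxU
      exact (hp q hq).1 x hx hxq
    have hBavoid : ∀ x ∈ rest.flatMap (fun p => p.1), x ∉ p.2.2 := by
      intro x hx
      obtain ⟨q, hq, hxq⟩ := List.mem_flatMap.mp hx
      exact (hp q hq).2 x hxq
    calc (fun τ => ((p :: rest).map (fun p => exProjL p.1 p.2.1 τ)).prod)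
        = fun τ => exProjL p.1 p.2.1 τ *
            exProjL (rest.flatMap (fun p => p.1))
              (fun τ => (rest.map (fun q => q.2.1 τ)).prod) τ := by
          simp only [List.map_cons, List.prod_cons]
          rw [← ih hdep' hnn' hpw']
      _ = exProjL p.1 (fun τ => p.2.1 τ *
            exProjL (rest.flatMap (fun p => p.1))
              (fun τ => (rest.map (fun q => q.2.1 τ)).prod) τ) :=
          (exProjL_mul_right hGdep hAavoid hGnn).symm
      _ = exProjL p.1 (exProjL (rest.flatMap (fun p => p.1))
            (fun τ => p.2.1 τ * (rest.map (fun q => q.2.1 τ)).prod)) := by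
          exact congrArg (exProjL p.1) (exProjL_mul_left (hdep p (List.mem_cons_self)) hBavoid
            (hnn p (List.mem_cons_self))).symm
      _ = exProjL ((p :: rest).flatMap (fun p => p.1))
            (fun τ => ((p :: rest).map (fun p => p.2.1 τ)).prod) := by
          rw [List.flatMap_cons, exProjL_append]
          simp only [List.map_cons, List.prod_cons]

end Helpers

section Tree
variable {V C : Type*}

lemma PJT.IsSubtree.trans' {a b c : PJT V C} (h1 : a.IsSubtree b) (h2 : b.IsSubtree c) :
    a.IsSubtree c := by
  induction h2 with
  | refl => exact h1
  | step hmem h ih => exact .step hmem ih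

lemma flatMap_sublist_of_mem {α β : Type*} (f : α → List β) {l : List α} {a : α} (h : a ∈ l) :
    (f a).Sublist (l.flatMap f) := by
  induction l with
  | nil => cases h
  | cons b l ih =>
    rw [List.flatMap_cons]
    rcases List.mem_cons.mp h with rfl | h
    · exact List.sublist_append_left _ _
    · exact (ih h).trans (List.sublist_append_right _ _)

lemma PJT.constraints_sublist_s9 {s t : PJT V C} (h : s.IsSubtree t) :
    s.constraints.Sublist t.constraints := by
  induction h with
  | refl => exact List.Sublist.refl _
  | step hmem h ih =>
    refine ih.trans ?_
    rw [PJT.constraints]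
    exact flatMap_sublist_of_mem (f := fun x => x.1.constraints) (List.mem_attach _ ⟨_, hmem⟩)

theorem PJT.mem_projVars_s9 : ∀ {t : PJT V C} {v : V}, v ∈ t.projVars →
    ∃ L cs, (PJT.internal L cs : PJT V C).IsSubtree t ∧ v ∈ L
  | .leaf c, v, h => by rw [PJT.projVars] at h; cases h
  | .internal L cs, v, h => by
    rw [PJT.projVars] at h
    rcases List.mem_append.mp h with h | h
    · exact ⟨L, cs, .refl _, h⟩
    · obtain ⟨x, hx, hv⟩ := List.mem_flatMap.mp h
      obtain ⟨L', cs', hsub, hvL⟩ := PJT.mem_projVars_s9 hv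
      exact ⟨L', cs', hsub.trans' (.step x.2 (.refl _)), hvL⟩
decreasing_by simp only [PJT.internal.sizeOf_spec]; have := List.sizeOf_lt_of_mem x.2; omega

lemma prod_flatMap_map {α β : Type*} (l : List α) (f : α → List β) (g : β → ℝ) :
    ((l.flatMap f).map g).prod = (l.map (fun a => ((f a).map g).prod)).prod := by
  induction l with
  | nil => simp
  | cons a l ih => simp [List.flatMap_cons, ih]

lemma hFun_internal (ind : C → (V → Bool) → ℝ) (L : List V) (cs : List (PJT V C)) :
    PJT.hFun ind (PJT.internal L cs)
      = fun τ => (cs.attach.map (fun x => PJT.hFun ind x.1 τ)).prod := by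
  funext τ
  unfold PJT.hFun
  rw [PJT.constraints]
  exact prod_flatMap_map _ _ _

end Tree

theorem stmt9' {V C : Type*} [DecidableEq V] (vars : C → Finset V) (X Y : Finset V)
    (hdisj : Disjoint X Y)
    (ind : C → (V → Bool) → ℝ)
    (h01 : ∀ c τ, ind c τ = 0 ∨ ind c τ = 1)
    (hdep : ∀ c, DependsOnlyOn (ind c) {v | v ∈ vars c})
    (t : PJT V C) (inX : PJT V C → Bool)
    (hnodup : t.constraints.Nodup)
    (hanc : ∀ s : PJT V C, s.IsSubtree t → ∀ L cs, s = PJT.internal L cs →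
      ∀ x ∈ L, ∀ c ∈ t.constraints, x ∈ vars c → c ∈ s.constraints)
    (hgradeX : ∀ s : PJT V C, s.IsSubtree t → s.IsInternal → inX s = true →
      ∀ v ∈ s.label, v ∈ X)
    (hgradeY : ∀ s : PJT V C, s.IsSubtree t → s.IsInternal → inX s = false →
      ∀ v ∈ s.label, v ∈ Y)
    (hdesc : ∀ sY sX : PJT V C, sY.IsSubtree t → sY.IsInternal → inX sY = false →
      sX.IsSubtree sY → sX.IsInternal → inX sX = false) :
    ∀ n : PJT V C, n.IsSubtree t →
      PJT.val ind inX n =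
        sumProjL (n.projVars.filter (fun v => decide (v ∈ X)))
          (exProjL (n.projVars.filter (fun v => decide (v ∈ Y))) (PJT.hFun ind n)) := by
  have indnn : ∀ c τ, 0 ≤ ind c τ := fun c τ => by rcases h01 c τ with h | h <;> simp [h]
  have hFnn : ∀ n : PJT V C, ∀ τ, 0 ≤ PJT.hFun ind n τ :=
    fun n => prodF_nonneg (fun c _ τ => indnn c τ)
  have hFdep : ∀ n : PJT V C,
      DependsOnlyOn (PJT.hFun ind n) {v | ∃ c ∈ n.constraints, v ∈ vars c} := by
    intro n τ τ' ha
    simp only [PJT.hFun]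
    congr 1
    apply List.map_congr_left
    intro c hc
    exact hdep c τ τ' (fun v hv => ha v ⟨c, hc, hv⟩)
  have key : ∀ k, ∀ n : PJT V C, sizeOf n ≤ k → n.IsSubtree t →
      PJT.val ind inX n =
        sumProjL (n.projVars.filter (fun v => decide (v ∈ X)))
          (exProjL (n.projVars.filter (fun v => decide (v ∈ Y))) (PJT.hFun ind n)) := by
    intro k
    induction k with
    | zero => intro n hsz; exfalso; cases n <;> simp at hsz
    | succ k ih =>
      rintro (⟨c⟩ | ⟨L, cs⟩) hsz hsub
      · -- leaf
        rw [PJT.val, PJT.projVars]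
        funext τ
        simp [sumProjL, exProjL, PJT.hFun, PJT.constraints]
      · -- internal
        set m : PJT V C := PJT.internal L cs with hm
        have hmint : m.IsInternal := by rw [hm]; constructor
        have hszc : ∀ x ∈ cs, sizeOf x ≤ k := by
          intro x hx
          have h1 := List.sizeOf_lt_of_mem hx
          simp only [hm, PJT.internal.sizeOf_spec] at hsz
          omega
        have hsubc : ∀ x ∈ cs, x.IsSubtree t :=
          fun x hx => (PJT.IsSubtree.step hx (.refl x)).trans' (hm ▸ hsub)
        have hIH : ∀ x ∈ cs, PJT.val ind inX x =
            sumProjL (x.projVars.filter (fun v => decide (v ∈ X)))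
              (exProjL (x.projVars.filter (fun v => decide (v ∈ Y))) (PJT.hFun ind x)) :=
          fun x hx => ih x (hszc x hx) (hsubc x hx)
        -- pairwise sibling disjointness
        have hnodupm : m.constraints.Nodup := (PJT.constraints_sublist_s9 hsub).nodup hnodup
        have hpwdisj : cs.attach.Pairwise
            (fun a b => a.1.constraints.Disjoint b.1.constraints) := by
          rw [hm, PJT.constraints, List.nodup_flatMap] at hnodupm
          exact hnodupm.2
        have havoid : ∀ a ∈ cs.attach, ∀ b ∈ cs.attach,
            a.1.constraints.Disjoint b.1.constraints →
            ∀ v ∈ a.1.projVars, v ∉ {v | ∃ c ∈ b.1.constraints, v ∈ vars c} := by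
          intro a _ b _ hdisjc v hv hvS
          obtain ⟨c, hcb, hvc⟩ := hvS
          obtain ⟨L', cs', hsub', hvL'⟩ := PJT.mem_projVars_s9 hv
          have hsubat : a.1.IsSubtree t := hsubc a.1 a.2
          have hsubs' : (PJT.internal L' cs' : PJT V C).IsSubtree t := hsub'.trans' hsubat
          have hct : c ∈ t.constraints := (PJT.constraints_sublist_s9 (hsubc b.1 b.2)).subset hcb
          have hca : c ∈ a.1.constraints :=
            (PJT.constraints_sublist_s9 hsub').subset (hanc _ hsubs' L' cs' rfl v hvL' c hct hvc)
          exact hdisjc hca hcb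
        have hpw2 : cs.attach.Pairwise (fun a b =>
            (∀ v ∈ a.1.projVars, v ∉ {v | ∃ c ∈ b.1.constraints, v ∈ vars c}) ∧
            (∀ v ∈ b.1.projVars, v ∉ {v | ∃ c ∈ a.1.constraints, v ∈ vars c})) := by
          refine hpwdisj.imp_of_mem ?_
          intro a b ha hb hd
          exact ⟨havoid a ha b hb hd, havoid b hb a ha (List.disjoint_symm hd)⟩
        have hpwA : cs.attach.Pairwise (fun a b =>
            (∀ v ∈ a.1.projVars.filter (fun v => decide (v ∈ X)),
              v ∉ {v | ∃ c ∈ b.1.constraints, v ∈ vars c}) ∧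
            (∀ v ∈ b.1.projVars.filter (fun v => decide (v ∈ X)),
              v ∉ {v | ∃ c ∈ a.1.constraints, v ∈ vars c})) :=
          hpw2.imp (fun h => ⟨fun v hv => h.1 v (List.mem_filter.mp hv).1,
            fun v hv => h.2 v (List.mem_filter.mp hv).1⟩)
        have hpwB : cs.attach.Pairwise (fun a b =>
            (∀ v ∈ a.1.projVars.filter (fun v => decide (v ∈ Y)),
              v ∉ {v | ∃ c ∈ b.1.constraints, v ∈ vars c}) ∧
            (∀ v ∈ b.1.projVars.filter (fun v => decide (v ∈ Y)),
              v ∉ {v | ∃ c ∈ a.1.constraints, v ∈ vars c})) :=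
          hpw2.imp (fun h => ⟨fun v hv => h.1 v (List.mem_filter.mp hv).1,
            fun v hv => h.2 v (List.mem_filter.mp hv).1⟩)
        -- combined exProj of the children's hFun
        have hcombB :
            (fun τ => (cs.attach.map (fun x =>
                exProjL (x.1.projVars.filter (fun v => decide (v ∈ Y)))
                  (PJT.hFun ind x.1) τ)).prod)
              = exProjL (cs.attach.flatMap
                    (fun x => x.1.projVars.filter (fun v => decide (v ∈ Y))))
                  (PJT.hFun ind m) := by
          have hc := comb_ex (cs.attach.map (fun x =>
              (x.1.projVars.filter (fun v => decide (v ∈ Y)), PJT.hFun ind x.1,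
                ({v | ∃ c ∈ x.1.constraints, v ∈ vars c} : Set V))))
            (by
              intro p hp
              obtain ⟨x, hx, rfl⟩ := List.mem_map.mp hp
              exact hFdep x.1)
            (by
              intro p hp
              obtain ⟨x, hx, rfl⟩ := List.mem_map.mp hp
              exact hFnn x.1)
            (by rw [List.pairwise_map]; exact hpwB)
          simp only [List.flatMap_map, List.map_map, Function.comp] at hc
          rw [hm, hFun_internal]
          exact hc
        have hcombA :
            (fun τ => (cs.attach.map (fun x =>
                sumProjL (x.1.projVars.filter (fun v => decide (v ∈ X)))
                  (exProjL (x.1.projVars.filter (fun v => decide (v ∈ Y)))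
                    (PJT.hFun ind x.1)) τ)).prod)
              = sumProjL (cs.attach.flatMap
                    (fun x => x.1.projVars.filter (fun v => decide (v ∈ X))))
                  (fun τ => (cs.attach.map (fun x =>
                    exProjL (x.1.projVars.filter (fun v => decide (v ∈ Y)))
                      (PJT.hFun ind x.1) τ)).prod) := by
          have hc := comb_sum (cs.attach.map (fun x =>
              (x.1.projVars.filter (fun v => decide (v ∈ X)),
                exProjL (x.1.projVars.filter (fun v => decide (v ∈ Y))) (PJT.hFun ind x.1),
                ({v | ∃ c ∈ x.1.constraints, v ∈ vars c} : Set V))))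
            (by
              intro p hp
              obtain ⟨x, hx, rfl⟩ := List.mem_map.mp hp
              exact exProjL_dep (hFdep x.1) _)
            (by rw [List.pairwise_map]; exact hpwA)
          simp only [List.flatMap_map, List.map_map, Function.comp] at hc
          exact hc
        have hval : PJT.val ind inX m =
            if inX m then
              sumProjL L (fun τ => (cs.attach.map (fun x => PJT.val ind inX x.1 τ)).prod)
            else
              exProjL L (fun τ => (cs.attach.map (fun x => PJT.val ind inX x.1 τ)).prod) := by
          conv_lhs => rw [hm, PJT.val]
        have hPm : m.projVars = L ++ cs.attach.flatMap (fun x => x.1.projVars) := by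
          rw [hm, PJT.projVars]
        by_cases hX : inX m = true
        · -- X grade
          have hLX : ∀ v ∈ L, v ∈ X := by
            have h2 := hgradeX m hsub hmint hX
            simpa [hm, PJT.label] using h2
          have hLfX : List.filter (fun v => decide (v ∈ X)) L = L :=
            List.filter_eq_self.mpr (fun a ha => by simpa using hLX a ha)
          have hLfY : List.filter (fun v => decide (v ∈ Y)) L = [] :=
            List.filter_eq_nil_iff.mpr (fun a ha h =>
              (Finset.disjoint_left.mp hdisj (hLX a ha)) (by simpa using h))
          have hmapIH : (fun τ => (cs.attach.map (fun x => PJT.val ind inX x.1 τ)).prod)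
              = fun τ => (cs.attach.map (fun x =>
                  sumProjL (x.1.projVars.filter (fun v => decide (v ∈ X)))
                    (exProjL (x.1.projVars.filter (fun v => decide (v ∈ Y)))
                      (PJT.hFun ind x.1)) τ)).prod := by
            funext τ
            congr 1
            apply List.map_congr_left
            intro x hx
            rw [hIH x.1 x.2]
          calc PJT.val ind inX m
              = sumProjL L (fun τ => (cs.attach.map (fun x => PJT.val ind inX x.1 τ)).prod) := by
                rw [hval, if_pos hX]
            _ = sumProjL L (sumProjL (cs.attach.flatMap
                  (fun x => x.1.projVars.filter (fun v => decide (v ∈ X))))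
                  (exProjL (cs.attach.flatMap
                    (fun x => x.1.projVars.filter (fun v => decide (v ∈ Y))))
                    (PJT.hFun ind m))) := by
                rw [hmapIH, hcombA, hcombB]
            _ = sumProjL (L ++ cs.attach.flatMap
                  (fun x => x.1.projVars.filter (fun v => decide (v ∈ X))))
                  (exProjL (cs.attach.flatMap
                    (fun x => x.1.projVars.filter (fun v => decide (v ∈ Y))))
                    (PJT.hFun ind m)) := (sumProjL_append _ _ _).symm
            _ = sumProjL (m.projVars.filter (fun v => decide (v ∈ X)))
                  (exProjL (m.projVars.filter (fun v => decide (v ∈ Y))) (PJT.hFun ind m)) := by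
                rw [hPm, List.filter_append, List.filter_append, List.filter_flatMap,
                  List.filter_flatMap, hLfX, hLfY, List.nil_append]
        · -- Y grade
          have hX' : inX m = false := by simpa using hX
          have hYsub : ∀ x ∈ cs, ∀ v ∈ x.projVars, v ∈ Y := by
            intro x hx v hv
            obtain ⟨L', cs', hsub', hvL'⟩ := PJT.mem_projVars_s9 hv
            have hsubm : (PJT.internal L' cs' : PJT V C).IsSubtree m :=
              hsub'.trans' (hm ▸ PJT.IsSubtree.step hx (.refl x))
            have hin : inX (PJT.internal L' cs') = false :=
              hdesc m _ hsub hmint hX' hsubm (by constructor)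
            exact hgradeY _ (hsubm.trans' hsub) (by constructor) hin v
              (by simpa [PJT.label] using hvL')
          have hLY : ∀ v ∈ L, v ∈ Y := by
            have h2 := hgradeY m hsub hmint hX'
            simpa [hm, PJT.label] using h2
          have hLfY : List.filter (fun v => decide (v ∈ Y)) L = L :=
            List.filter_eq_self.mpr (fun a ha => by simpa using hLY a ha)
          have hLfX : List.filter (fun v => decide (v ∈ X)) L = [] :=
            List.filter_eq_nil_iff.mpr (fun a ha h =>
              (Finset.disjoint_right.mp hdisj (hLY a ha)) (by simpa using h))
          have hAnil : ∀ x ∈ cs, x.projVars.filter (fun v => decide (v ∈ X)) = [] := by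
            intro x hx
            refine List.filter_eq_nil_iff.mpr (fun v hv h => ?_)
            exact (Finset.disjoint_right.mp hdisj (hYsub x hx v hv)) (by simpa using h)
          have hflatAnil : cs.attach.flatMap
              (fun x => x.1.projVars.filter (fun v => decide (v ∈ X))) = [] :=
            List.flatMap_eq_nil_iff.mpr (fun x _ => hAnil x.1 x.2)
          have hmapIH : (fun τ => (cs.attach.map (fun x => PJT.val ind inX x.1 τ)).prod)
              = fun τ => (cs.attach.map (fun x =>
                  exProjL (x.1.projVars.filter (fun v => decide (v ∈ Y)))
                    (PJT.hFun ind x.1) τ)).prod := by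
            funext τ
            congr 1
            apply List.map_congr_left
            intro x hx
            rw [hIH x.1 x.2, hAnil x.1 x.2]
            rfl
          calc PJT.val ind inX m
              = exProjL L (fun τ => (cs.attach.map (fun x => PJT.val ind inX x.1 τ)).prod) := by
                rw [hval, if_neg (by simp [hX'])]
            _ = exProjL L (exProjL (cs.attach.flatMap
                  (fun x => x.1.projVars.filter (fun v => decide (v ∈ Y))))
                  (PJT.hFun ind m)) := by
                rw [hmapIH, hcombB]
            _ = exProjL (L ++ cs.attach.flatMap
                  (fun x => x.1.projVars.filter (fun v => decide (v ∈ Y))))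
                  (PJT.hFun ind m) := (exProjL_append _ _ _).symm
            _ = sumProjL (m.projVars.filter (fun v => decide (v ∈ X)))
                  (exProjL (m.projVars.filter (fun v => decide (v ∈ Y))) (PJT.hFun ind m)) := by
                rw [hPm, List.filter_append, List.filter_append, List.filter_flatMap,
                  List.filter_flatMap, hLfX, hLfY, hflatAnil]
                simp only [List.nil_append]
                rfl
  exact fun n h => key (sizeOf n) n le_rfl h

/-- Lemma 2: for every node `n` of an X,Y-graded project-join tree,
`gₙ = Σ_{P(n) ∩ X} ∃_{P(n) ∩ Y} hₙ`. -/
theorem stmt9 {V C : Type*} [DecidableEq V] (vars : C → Finset V) (X Y : Finset V)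
    (hdisj : Disjoint X Y)
    (ind : C → (V → Bool) → ℝ)
    (h01 : ∀ c τ, ind c τ = 0 ∨ ind c τ = 1)
    (hdep : ∀ c, DependsOnlyOn (ind c) {v | v ∈ vars c})
    (t : PJT V C) (inX : PJT V C → Bool)
    (hnodup : t.constraints.Nodup)
    (hvnodup : t.projVars.Nodup)
    (hpartvars : ∀ v : V, v ∈ t.projVars ↔ ∃ c ∈ t.constraints, v ∈ vars c)
    (hanc : ∀ s : PJT V C, s.IsSubtree t → ∀ L cs, s = PJT.internal L cs →
      ∀ x ∈ L, ∀ c ∈ t.constraints, x ∈ vars c → c ∈ s.constraints)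
    (hgradeX : ∀ s : PJT V C, s.IsSubtree t → s.IsInternal → inX s = true →
      ∀ v ∈ s.label, v ∈ X)
    (hgradeY : ∀ s : PJT V C, s.IsSubtree t → s.IsInternal → inX s = false →
      ∀ v ∈ s.label, v ∈ Y)
    (hdesc : ∀ sY sX : PJT V C, sY.IsSubtree t → sY.IsInternal → inX sY = false →
      sX.IsSubtree sY → sX.IsInternal → inX sX = false) :
    ∀ n : PJT V C, n.IsSubtree t →
      PJT.val ind inX n =
        sumProjL (n.projVars.filter (fun v => decide (v ∈ X)))
          (exProjL (n.projVars.filter (fun v => decide (v ∈ Y))) (PJT.hFun ind n)) :=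
  stmt9' vars X Y hdisj ind h01 hdep t inX hnodup hanc hgradeX hgradeY hdesc
end
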